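/- ε-stability implies approximate optimality: Let G = (U ∪ V, E) be a finite weighted bipartite graph with positive edge weights w, let 0 ≤ ε ≤ 1/2, let M ⊆ E be a matching, and let y assign a nonnegative real y_u to each u ∈ U. Suppose (i) y_u = 0 for every u ∈ U unmatched by M; (ii) for every matched edge uv ∈ M, w(uv) − y_u ≥ 0 and w(uv) − y_u ≥ (1−2ε)·(w(u'v) − y_{u'}) for every neighbor u' ∈ N(v); and (iii) for every v ∈ V unmatched by M and every neighbor u ∈ N(v), w(uv) − y_u ≤ ε·w(uv). Then for every matching M' ⊆ E, w(M) ≥ (1−2ε)·w(M'); in particular M is a (1−2ε)-approximate maximum weight matching. -/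

import Mathlib

/-!
Weak LP duality for bipartite matchings. Give each `v ∈ V` the dual value `z v`, the utility
of its matched edge (`0` if `v` is unmatched). Stability makes `(y, z)` a feasible dual for
the weights `(1 - 2ε) w`: `(1 - 2ε) w(uv) ≤ y u + z v` on every edge. Summing this over a
matching `M'` bounds `(1 - 2ε) w(M')` by `∑ y + ∑ z`, and since `y` vanishes off `M`, that
total is `∑_{uv ∈ M} (y u + (w(uv) - y u)) = w(M)`.
-/

open Finset

/-- `M` is a matching: no two distinct edges share an endpoint. -/
def IsMatching {U V : Type*} (M : Finset (U × V)) : Prop :=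
  ∀ e ∈ M, ∀ e' ∈ M, e ≠ e' → e.1 ≠ e'.1 ∧ e.2 ≠ e'.2

namespace IsMatching

variable {U V : Type*} {M : Finset (U × V)}

theorem injOn_fst (hM : IsMatching M) : Set.InjOn Prod.fst (M : Set (U × V)) :=
  fun e he e' he' h ↦ by_contra fun hne ↦ (hM e he e' he' hne).1 h

theorem injOn_snd (hM : IsMatching M) : Set.InjOn Prod.snd (M : Set (U × V)) :=
  fun e he e' he' h ↦ by_contra fun hne ↦ (hM e he e' he' hne).2 h

theorem sum_fst_eq_sum_univ {β : Type*} [AddCommMonoid β] [Fintype U] [DecidableEq U]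
    (hM : IsMatching M) {f : U → β}
    (hf : ∀ u, (∀ e ∈ M, e.1 ≠ u) → f u = 0) : ∑ e ∈ M, f e.1 = ∑ u, f u := by
  rw [← sum_image hM.injOn_fst]
  refine sum_subset (subset_univ _) fun u _ hu ↦ hf u fun e he h ↦ hu ?_
  exact mem_image.mpr ⟨e, he, h⟩

variable {β : Type*} [AddCommMonoid β] [PartialOrder β] [IsOrderedAddMonoid β]

theorem sum_fst_le_sum_univ [Fintype U] [DecidableEq U] (hM : IsMatching M) {f : U → β}
    (hf : ∀ u, 0 ≤ f u) : ∑ e ∈ M, f e.1 ≤ ∑ u, f u := by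
  rw [← sum_image hM.injOn_fst]
  exact sum_le_univ_sum_of_nonneg hf

theorem sum_snd_le_sum_univ [Fintype V] [DecidableEq V] (hM : IsMatching M) {f : V → β}
    (hf : ∀ v, 0 ≤ f v) : ∑ e ∈ M, f e.2 ≤ ∑ v, f v := by
  rw [← sum_image hM.injOn_snd]
  exact sum_le_univ_sum_of_nonneg hf

/-- Weak duality: a cover `c e ≤ f e.1 + g e.2` of the edges by nonnegative vertex values
bounds the `c`-weight of every matching. -/
theorem sum_le_sum_add_sum [Fintype U] [Fintype V] [DecidableEq U] [DecidableEq V]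
    (hM : IsMatching M) {c : U × V → β} {f : U → β} {g : V → β}
    (hf : ∀ u, 0 ≤ f u) (hg : ∀ v, 0 ≤ g v) (hc : ∀ e ∈ M, c e ≤ f e.1 + g e.2) :
    ∑ e ∈ M, c e ≤ ∑ u, f u + ∑ v, g v :=
  calc ∑ e ∈ M, c e ≤ ∑ e ∈ M, (f e.1 + g e.2) := sum_le_sum hc
    _ = ∑ e ∈ M, f e.1 + ∑ e ∈ M, g e.2 := sum_add_distrib
    _ ≤ ∑ u, f u + ∑ v, g v :=
      add_le_add (hM.sum_fst_le_sum_univ hf) (hM.sum_snd_le_sum_univ hg)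

end IsMatching

section MatchedUtility

variable {U V : Type*} [DecidableEq V] (M : Finset (U × V)) (w : U × V → ℝ) (y : U → ℝ)

def matchedUtility (v : V) : ℝ :=
  ∑ e ∈ M with e.2 = v, (w e - y e.1)

variable {M w y}

theorem matchedUtility_of_mem (hM : IsMatching M) {e : U × V} (he : e ∈ M) :
    matchedUtility M w y e.2 = w e - y e.1 := by
  have : {f ∈ M | f.2 = e.2} = {e} :=
    eq_singleton_iff_unique_mem.mpr ⟨mem_filter.mpr ⟨he, rfl⟩,
      fun f hf ↦ hM.injOn_snd (mem_filter.mp hf).1 he (mem_filter.mp hf).2⟩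
  rw [matchedUtility, this, sum_singleton]

theorem matchedUtility_of_unmatched {v : V} (hv : ∀ e ∈ M, e.2 ≠ v) :
    matchedUtility M w y v = 0 :=
  sum_eq_zero fun e he ↦ absurd (mem_filter.mp he).2 (hv e (mem_filter.mp he).1)

theorem matchedUtility_nonneg (h : ∀ e ∈ M, 0 ≤ w e - y e.1) (v : V) :
    0 ≤ matchedUtility M w y v :=
  sum_nonneg fun e he ↦ h e (mem_filter.mp he).1

theorem sum_matchedUtility [Fintype V] :
    ∑ v, matchedUtility M w y v = ∑ e ∈ M, (w e - y e.1) :=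
  sum_fiberwise M Prod.snd _

end MatchedUtility

theorem mul_le_price_add_matchedUtility {U V : Type*} [DecidableEq V]
    {E M : Finset (U × V)} {w : U × V → ℝ} {y : U → ℝ} {ε : ℝ} (hε0 : 0 ≤ ε)
    (hM : IsMatching M) (hy : ∀ u, 0 ≤ y u)
    (hmatched : ∀ e ∈ M, ∀ u' : U, (u', e.2) ∈ E →
      (1 - 2 * ε) * (w (u', e.2) - y u') ≤ w e - y e.1)
    (hunmatched : ∀ v : V, (∀ e ∈ M, e.2 ≠ v) →
      ∀ u : U, (u, v) ∈ E → w (u, v) - y u ≤ ε * w (u, v))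
    {u : U} {v : V} (huv : (u, v) ∈ E) (hw : 0 ≤ w (u, v)) :
    (1 - 2 * ε) * w (u, v) ≤ y u + matchedUtility M w y v := by
  by_cases hv : ∃ f ∈ M, f.2 = v
  · obtain ⟨f, hf, rfl⟩ := hv
    have := hmatched f hf u huv
    rw [matchedUtility_of_mem hM hf]
    linarith [mul_nonneg hε0 (hy u)]
  · push Not at hv
    have := hunmatched v hv u huv
    rw [matchedUtility_of_unmatched hv]
    linarith [mul_nonneg hε0 hw]

theorem eps_stable_implies_approx_optimal_general
    {U V : Type*} [Fintype U] [Fintype V] [DecidableEq U] [DecidableEq V]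
    (E : Finset (U × V)) (w : U × V → ℝ)
    (hw : ∀ e ∈ E, 0 < w e)
    (ε : ℝ) (hε0 : 0 ≤ ε)
    (M : Finset (U × V)) (hM : IsMatching M)
    (y : U → ℝ) (hy : ∀ u : U, 0 ≤ y u)
    (hy0 : ∀ u : U, (∀ e ∈ M, e.1 ≠ u) → y u = 0)
    (hmatched : ∀ e ∈ M, 0 ≤ w e - y e.1 ∧
      ∀ u' : U, (u', e.2) ∈ E → (1 - 2 * ε) * (w (u', e.2) - y u') ≤ w e - y e.1)
    (hunmatched : ∀ v : V, (∀ e ∈ M, e.2 ≠ v) →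
      ∀ u : U, (u, v) ∈ E → w (u, v) - y u ≤ ε * w (u, v)) :
    ∀ M' : Finset (U × V), M' ⊆ E → IsMatching M' →
      (1 - 2 * ε) * ∑ e ∈ M', w e ≤ ∑ e ∈ M, w e := by
  intro M' hM'E hM'
  have hfeas : ∀ e ∈ M', (1 - 2 * ε) * w e ≤ y e.1 + matchedUtility M w y e.2 :=
    fun e he ↦ mul_le_price_add_matchedUtility hε0 hM hy (fun f hf ↦ (hmatched f hf).2)
      hunmatched (hM'E he) (hw e (hM'E he)).le
  calc (1 - 2 * ε) * ∑ e ∈ M', w e = ∑ e ∈ M', (1 - 2 * ε) * w e := mul_sum _ _ _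
    _ ≤ ∑ u, y u + ∑ v, matchedUtility M w y v :=
      hM'.sum_le_sum_add_sum hy (matchedUtility_nonneg fun e he ↦ (hmatched e he).1) hfeas
    _ = ∑ e ∈ M, (y e.1 + (w e - y e.1)) := by
      rw [sum_add_distrib, hM.sum_fst_eq_sum_univ hy0, sum_matchedUtility]
    _ = ∑ e ∈ M, w e := by simp only [add_sub_cancel]

/-- **ε-stability implies approximate optimality.**
Suppose the prices `y` on `U` vanish on unmatched vertices, every matched edge `uv ∈ M`
has nonnegative utility `w(uv) - y u` dominating `(1-2ε)` times the utility of each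
competing edge `u'v ∈ E`, and every unmatched `v ∈ V` only sees edges of utility at most
`ε·w(uv)`. Then `M` is a `(1-2ε)`-approximate maximum weight matching. -/
theorem eps_stable_implies_approx_optimal
    {U V : Type*} [Fintype U] [Fintype V] [DecidableEq U] [DecidableEq V]
    (E : Finset (U × V)) (w : U × V → ℝ)
    (hw : ∀ e ∈ E, 0 < w e)
    (ε : ℝ) (hε0 : 0 ≤ ε) (hε : ε ≤ 1 / 2)
    (M : Finset (U × V)) (hME : M ⊆ E) (hM : IsMatching M)
    (y : U → ℝ) (hy : ∀ u : U, 0 ≤ y u)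
    (hy0 : ∀ u : U, (∀ e ∈ M, e.1 ≠ u) → y u = 0)
    (hmatched : ∀ e ∈ M, 0 ≤ w e - y e.1 ∧
      ∀ u' : U, (u', e.2) ∈ E → (1 - 2 * ε) * (w (u', e.2) - y u') ≤ w e - y e.1)
    (hunmatched : ∀ v : V, (∀ e ∈ M, e.2 ≠ v) →
      ∀ u : U, (u, v) ∈ E → w (u, v) - y u ≤ ε * w (u, v)) :
    ∀ M' : Finset (U × V), M' ⊆ E → IsMatching M' →
      (1 - 2 * ε) * ∑ e ∈ M', w e ≤ ∑ e ∈ M, w e :=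
  eps_stable_implies_approx_optimal_general E w hw ε hε0 M hM y hy hy0 hmatched hunmatched
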